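/- arXiv:2506.04675 — 3 statements merged into one kernel-verified Lean document; each statement's English description precedes it below -/
import Mathlib

section
/- Let Q be a finite index set, c : Q → ℝ with c q ≥ 0 for all q, and d : Q → ℝ^P. If the set of vectors {d q : q ∈ Q, c q > 0} spans ℝ^P, then the function ℓ(β) = ∑_{q ∈ Q} c q * log(expit(⟪d q, β⟫)) is strictly concave on ℝ^P; in particular ℓ has at most one maximizer, so the maximum composite partial likelihood estimator is unique whenever it exists. -/
open RealInnerProductSpace

noncomputable def expit (x : ℝ) : ℝ := Real.exp x / (1 + Real.exp x)

/-! The log-likelihood `log ∘ expit` has derivative `1 - expit = (1 + exp)⁻¹`, which is strictly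
decreasing, so each summand `c q * log (expit ⟪d q, β⟫)` is concave in `β`, and strictly so along
every direction in which `⟪d q, ·⟫` is not constant. Since the `d q` with `c q > 0` span, no
direction is left flat, so the sum is strictly concave and has at most one maximizer. -/

open Set

theorem log_expit (x : ℝ) : Real.log (expit x) = x - Real.log (1 + Real.exp x) := by
  rw [expit, Real.log_div (Real.exp_ne_zero x) (by positivity), Real.log_exp]

theorem hasDerivAt_log_expit (x : ℝ) :
    HasDerivAt (fun y => Real.log (expit y)) (1 + Real.exp x)⁻¹ x := by
  have hpos : 0 < 1 + Real.exp x := by positivity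
  have h : HasDerivAt (fun y => y - Real.log (1 + Real.exp y))
      (1 - Real.exp x / (1 + Real.exp x)) x :=
    (hasDerivAt_id x).sub (((Real.hasDerivAt_exp x).const_add 1).log hpos.ne')
  have hval : 1 - Real.exp x / (1 + Real.exp x) = (1 + Real.exp x)⁻¹ := by
    field_simp
    ring
  rw [hval] at h
  simpa only [log_expit] using h

theorem strictConcaveOn_log_expit : StrictConcaveOn ℝ univ (fun x => Real.log (expit x)) := by
  have hderiv : deriv (fun y => Real.log (expit y)) = fun x => (1 + Real.exp x)⁻¹ :=
    funext fun x => (hasDerivAt_log_expit x).deriv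
  refine StrictAnti.strictConcaveOn_univ_of_deriv
    (continuous_iff_continuousAt.mpr fun x => (hasDerivAt_log_expit x).continuousAt) ?_
  rw [hderiv]
  intro a b hab
  dsimp only
  gcongr

theorem exists_inner_ne_of_span_eq_top {E : Type*} [NormedAddCommGroup E] [InnerProductSpace ℝ E]
    {S : Set E} (hS : Submodule.span ℝ S = ⊤) {x y : E} (hxy : x ≠ y) :
    ∃ v ∈ S, ⟪v, x⟫ ≠ ⟪v, y⟫ := by
  by_contra! h
  have hS_perp : S ⊆ (ℝ ∙ (x - y))ᗮ := fun v hv => by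
    rw [SetLike.mem_coe, Submodule.mem_orthogonal_singleton_iff_inner_left, inner_sub_right,
      h v hv, sub_self]
  have hxy_perp : x - y ∈ (ℝ ∙ (x - y))ᗮ :=
    (hS ▸ Submodule.span_le.mpr hS_perp) Submodule.mem_top
  rw [Submodule.mem_orthogonal_singleton_iff_inner_left, inner_self_eq_zero, sub_eq_zero]
    at hxy_perp
  exact hxy hxy_perp

theorem StrictConcaveOn.sum_mul_comp_linearMap {E ι : Type*} [AddCommGroup E] [Module ℝ E]
    [Fintype ι] {g : ℝ → ℝ} (hg : StrictConcaveOn ℝ univ g) {c : ι → ℝ} (hc : ∀ i, 0 ≤ c i)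
    (ℓ : ι → E →ₗ[ℝ] ℝ) (hsep : ∀ x y, x ≠ y → ∃ i, 0 < c i ∧ ℓ i x ≠ ℓ i y) :
    StrictConcaveOn ℝ univ (fun x => ∑ i, c i * g (ℓ i x)) := by
  refine ⟨convex_univ, fun x _ y _ hxy a b ha hb hab => ?_⟩
  obtain ⟨i₀, hci₀, hne⟩ := hsep x y hxy
  have hcomb : ∀ i, a • (c i * g (ℓ i x)) + b • (c i * g (ℓ i y))
      = c i * (a • g (ℓ i x) + b • g (ℓ i y)) := fun i => by
    simp only [smul_eq_mul]; ring
  simp only [Finset.smul_sum, ← Finset.sum_add_distrib, hcomb, map_add, map_smul]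
  refine Finset.sum_lt_sum (fun i _ => ?_) ⟨i₀, Finset.mem_univ i₀, ?_⟩
  · exact mul_le_mul_of_nonneg_left
      (hg.concaveOn.2 (mem_univ _) (mem_univ _) ha.le hb.le hab) (hc i)
  · exact mul_lt_mul_of_pos_left (hg.2 (mem_univ _) (mem_univ _) hne ha hb hab) hci₀

theorem composite_partial_loglik_strictly_concave
    {P : ℕ} {Q : Type*} [Fintype Q]
    (c : Q → ℝ) (hc : ∀ q, 0 ≤ c q) (d : Q → EuclideanSpace ℝ (Fin P))
    (hspan : Submodule.span ℝ {v | ∃ q : Q, 0 < c q ∧ d q = v} = ⊤) :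
    StrictConcaveOn ℝ Set.univ (fun β : EuclideanSpace ℝ (Fin P) =>
        ∑ q : Q, c q * Real.log (expit ⟪d q, β⟫)) ∧
    ∀ β₁ β₂ : EuclideanSpace ℝ (Fin P),
      (∀ β, ∑ q : Q, c q * Real.log (expit ⟪d q, β⟫)
              ≤ ∑ q : Q, c q * Real.log (expit ⟪d q, β₁⟫)) →
      (∀ β, ∑ q : Q, c q * Real.log (expit ⟪d q, β⟫)
              ≤ ∑ q : Q, c q * Real.log (expit ⟪d q, β₂⟫)) →
      β₁ = β₂ := by
  have hsep : ∀ β₁ β₂, β₁ ≠ β₂ → ∃ q, 0 < c q ∧ ⟪d q, β₁⟫ ≠ ⟪d q, β₂⟫ := fun β₁ β₂ hne => by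
    obtain ⟨_, ⟨q, hq, rfl⟩, hne'⟩ := exists_inner_ne_of_span_eq_top hspan hne
    exact ⟨q, hq, hne'⟩
  have hconcave :=
    strictConcaveOn_log_expit.sum_mul_comp_linearMap hc (fun q => innerₛₗ ℝ (d q)) hsep
  exact ⟨hconcave, fun β₁ β₂ h₁ h₂ =>
    hconcave.eq_of_isMaxOn (isMaxOn_univ_iff.mpr h₁) (isMaxOn_univ_iff.mpr h₂) trivial trivial⟩
end

section
/- Let I be a nonempty finite index set, f : I → ℝ, and i ∈ I. Then ∏_{j ∈ I, j ≠ i} expit(f i - f j) ≤ exp(f i) / ∑_{j ∈ I} exp(f j). (The one-vs-each bound: each pairwise-product factor of the composite partial likelihood is a lower bound for the corresponding softmax factor of Cox's partial likelihood.) -/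
open Finset Real

theorem Finset.one_add_sum_le_prod_one_add {ι R : Type*} [CommSemiring R] [PartialOrder R]
    [IsOrderedRing R] (s : Finset ι) {a : ι → R} (ha : ∀ j ∈ s, 0 ≤ a j) :
    1 + ∑ j ∈ s, a j ≤ ∏ j ∈ s, (1 + a j) := by
  induction s using Finset.cons_induction with
  | empty => simp
  | cons x s hx ih =>
    have hax : 0 ≤ a x := ha x (mem_cons_self x s)
    have hs : ∀ j ∈ s, 0 ≤ a j := fun j hj => ha j (mem_cons_of_mem hj)
    rw [sum_cons, prod_cons]
    calc 1 + (a x + ∑ j ∈ s, a j)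
        ≤ 1 + (a x + ∑ j ∈ s, a j) + a x * ∑ j ∈ s, a j :=
          le_add_of_nonneg_right (mul_nonneg hax (sum_nonneg hs))
      _ = (1 + a x) * (1 + ∑ j ∈ s, a j) := by ring
      _ ≤ (1 + a x) * ∏ j ∈ s, (1 + a j) :=
          mul_le_mul_of_nonneg_left (ih hs) (add_nonneg zero_le_one hax)

theorem Finset.prod_inv_one_add_le_inv_one_add_sum {ι K : Type*} [Field K] [LinearOrder K]
    [IsStrictOrderedRing K] (s : Finset ι) {a : ι → K} (ha : ∀ j ∈ s, 0 ≤ a j) :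
    ∏ j ∈ s, (1 + a j)⁻¹ ≤ (1 + ∑ j ∈ s, a j)⁻¹ := by
  rw [prod_inv_distrib]
  exact inv_anti₀ (add_pos_of_pos_of_nonneg one_pos (sum_nonneg ha))
    (s.one_add_sum_le_prod_one_add ha)

theorem expit_eq_inv_one_add_exp_neg (x : ℝ) : expit x = (1 + exp (-x))⁻¹ := by
  rw [expit, exp_neg, div_eq_iff (by positivity)]
  field_simp
  ring

theorem exp_div_sum_exp_eq_inv_one_add_sum_erase {I : Type*} [Fintype I] [DecidableEq I]
    (f : I → ℝ) (i : I) :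
    exp (f i) / ∑ j, exp (f j) = (1 + ∑ j ∈ univ.erase i, exp (f j - f i))⁻¹ := by
  have hsum : ∑ j, exp (f j) = exp (f i) * ∑ j, exp (f j - f i) := by
    rw [mul_sum]
    exact sum_congr rfl fun j _ => by rw [← exp_add, add_sub_cancel]
  rw [hsum, ← add_sum_erase _ _ (mem_univ i), sub_self, exp_zero, div_mul_eq_div_div,
    div_self (exp_ne_zero _), one_div]

theorem one_vs_each_bound_general
    {I : Type*} [Fintype I] [DecidableEq I]
    (f : I → ℝ) (i : I) :
    ∏ j ∈ Finset.univ.erase i, expit (f i - f j)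
      ≤ Real.exp (f i) / ∑ j : I, Real.exp (f j) := by
  simp only [expit_eq_inv_one_add_exp_neg, neg_sub]
  rw [exp_div_sum_exp_eq_inv_one_add_sum_erase]
  exact prod_inv_one_add_le_inv_one_add_sum _ fun j _ => (exp_pos _).le

theorem one_vs_each_bound
    {I : Type*} [Fintype I] [DecidableEq I] [Nonempty I]
    (f : I → ℝ) (i : I) :
    ∏ j ∈ Finset.univ.erase i, expit (f i - f j)
      ≤ Real.exp (f i) / ∑ j : I, Real.exp (f j) :=
  one_vs_each_bound_general f i
end

section
/- Let n ∈ ℕ, and for i = 1,…,n let δ_i ∈ {0,1}, let X_i ∈ ℝ^P, and let R_i ⊆ {1,…,n} be a finite set containing i (the risk set at time T_i). Then for every β ∈ ℝ^P, ∏_{i=1}^n (∏_{j ∈ R_i, j ≠ i} expit(⟪X_i - X_j, β⟫))^{δ_i} ≤ ∏_{i=1}^n (exp(⟪X_i, β⟫) / ∑_{j ∈ R_i} exp(⟪X_j, β⟫))^{δ_i}. (The composite partial likelihood is a lower bound of Cox's partial likelihood.) -/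
/-!
Write `a j = ⟪X j, β⟫`. Then `expit (a i - a j) = eᵃⁱ / (eᵃⁱ + eᵃʲ)`, and a product of fractions
`x / (x + y j)` with `y j ≥ 0` is at most `x / (x + ∑ j, y j)`, because
`(x + y) (x + z) ≥ x (x + y + z)`. With `x = eᵃⁱ` and `j` ranging over `R i \ {i}`, the right-hand
side is the Cox factor `eᵃⁱ / ∑_{j ∈ R i} eᵃʲ`, and the inequality survives the powers `δ i`.
-/

open RealInnerProductSpace

theorem expit_pos (x : ℝ) : 0 < expit x := by
  unfold expit
  positivity

theorem expit_sub (a b : ℝ) : expit (a - b) = Real.exp a / (Real.exp a + Real.exp b) := by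
  rw [expit, Real.exp_sub]
  field_simp
  ring

theorem div_add_mul_div_add_le {𝕜 : Type*} [Field 𝕜] [LinearOrder 𝕜] [IsStrictOrderedRing 𝕜]
    {x y z : 𝕜} (hx : 0 < x) (hy : 0 ≤ y) (hz : 0 ≤ z) :
    x / (x + y) * (x / (x + z)) ≤ x / (x + (y + z)) := by
  rw [div_mul_div_comm, div_le_div_iff₀ (by positivity) (by positivity)]
  nlinarith [mul_nonneg (mul_nonneg hx.le hy) hz]

theorem Finset.prod_div_add_le_div_add_sum {ι 𝕜 : Type*} [Field 𝕜] [LinearOrder 𝕜]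
    [IsStrictOrderedRing 𝕜] (s : Finset ι) {x : 𝕜} (hx : 0 < x) {y : ι → 𝕜}
    (hy : ∀ i ∈ s, 0 ≤ y i) : ∏ i ∈ s, x / (x + y i) ≤ x / (x + ∑ i ∈ s, y i) := by
  induction s using Finset.cons_induction with
  | empty => simp [hx.ne']
  | cons a s ha ih =>
    rw [Finset.forall_mem_cons] at hy
    rw [prod_cons, sum_cons]
    calc x / (x + y a) * ∏ i ∈ s, x / (x + y i)
        ≤ x / (x + y a) * (x / (x + ∑ i ∈ s, y i)) := by
          gcongr
          · have := hy.1; positivity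
          · exact ih hy.2
      _ ≤ x / (x + (y a + ∑ i ∈ s, y i)) :=
          div_add_mul_div_add_le hx hy.1 (sum_nonneg hy.2)

theorem Finset.prod_expit_sub_le_exp_div_sum_exp {ι : Type*} [DecidableEq ι] {s : Finset ι}
    {i : ι} (hi : i ∈ s) (a : ι → ℝ) :
    ∏ j ∈ s.erase i, expit (a i - a j) ≤ Real.exp (a i) / ∑ j ∈ s, Real.exp (a j) := by
  simp_rw [expit_sub, ← add_sum_erase _ _ hi]
  exact prod_div_add_le_div_add_sum _ (Real.exp_pos _) fun j _ => (Real.exp_pos _).le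

theorem composite_le_partial_likelihood_general
    {P : ℕ} (n : ℕ) (δ : Fin n → ℕ)
    (X : Fin n → EuclideanSpace ℝ (Fin P))
    (R : Fin n → Finset (Fin n)) (hR : ∀ i, i ∈ R i)
    (β : EuclideanSpace ℝ (Fin P)) :
    ∏ i : Fin n, (∏ j ∈ (R i).erase i, expit ⟪X i - X j, β⟫) ^ δ i
      ≤ ∏ i : Fin n,
          (Real.exp ⟪X i, β⟫ / ∑ j ∈ R i, Real.exp ⟪X j, β⟫) ^ δ i := by
  have factor_nonneg (i : Fin n) : 0 ≤ ∏ j ∈ (R i).erase i, expit ⟪X i - X j, β⟫ :=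
    Finset.prod_nonneg fun j _ => (expit_pos _).le
  refine Finset.prod_le_prod (fun i _ => pow_nonneg (factor_nonneg i) _) fun i _ => ?_
  refine pow_le_pow_left₀ (factor_nonneg i) ?_ _
  simp_rw [inner_sub_left]
  exact Finset.prod_expit_sub_le_exp_div_sum_exp (hR i) fun j => ⟪X j, β⟫

theorem composite_le_partial_likelihood
    {P : ℕ} (n : ℕ) (δ : Fin n → ℕ) (hδ : ∀ i, δ i = 0 ∨ δ i = 1)
    (X : Fin n → EuclideanSpace ℝ (Fin P))
    (R : Fin n → Finset (Fin n)) (hR : ∀ i, i ∈ R i)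
    (β : EuclideanSpace ℝ (Fin P)) :
    ∏ i : Fin n, (∏ j ∈ (R i).erase i, expit ⟪X i - X j, β⟫) ^ δ i
      ≤ ∏ i : Fin n,
          (Real.exp ⟪X i, β⟫ / ∑ j ∈ R i, Real.exp ⟪X j, β⟫) ^ δ i :=
  composite_le_partial_likelihood_general n δ X R hR β
end
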